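/- Duality identity for the linearized power system: let (u, m, H̄) be a classical solution of the power-type ergodic MFG system with α > 0, let i ∈ {1,…,n}, and let (ũ, m̃, c) be a classical solution of the associated linearized system in direction e_i. Then ∫_Q [ m̃ ∇u·e_i − q α^q m^{q−1} m̃² − m (∇ũ + e_i)·∇ũ ] dy = 0. -/

import Mathlib

open MeasureTheory Real

/-- Partial derivative in direction `i`. -/
noncomputable def pd {n : ℕ} (i : Fin n) (f : (Fin n → ℝ) → ℝ) (x : Fin n → ℝ) : ℝ :=
  fderiv ℝ f x (Pi.single i 1)

/-- Laplacian: sum of second partial derivatives. -/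
noncomputable def lap {n : ℕ} (f : (Fin n → ℝ) → ℝ) (x : Fin n → ℝ) : ℝ :=
  ∑ i, pd i (pd i f) x

/-- Divergence of a vector field. -/
noncomputable def dvg {n : ℕ} (F : (Fin n → ℝ) → Fin n → ℝ) (x : Fin n → ℝ) : ℝ :=
  ∑ i, pd i (fun y => F y i) x

/-- `ℤⁿ`-periodicity. -/
def ZPeriodic {n : ℕ} (f : (Fin n → ℝ) → ℝ) : Prop :=
  ∀ (k : Fin n → ℤ) (x : Fin n → ℝ), f (x + fun i => (k i : ℝ)) = f x

/-- The unit cube `Q = [0,1]ⁿ`. -/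
def unitCube (n : ℕ) : Set (Fin n → ℝ) := Set.Icc 0 1

/-- A classical solution `(u, m, H)` of the power-type ergodic MFG system
`-Δu + ½|∇u+P|² - v - αᑫ mᑫ = H`, `-Δm - div(m(∇u+P)) = 0`, `∫ u = 0`, `∫ m = 1`. -/
structure PowerMFG {n : ℕ} (v : (Fin n → ℝ) → ℝ) (P : Fin n → ℝ) (α q : ℝ)
    (u m : (Fin n → ℝ) → ℝ) (H : ℝ) : Prop where
  hu : ContDiff ℝ 2 u
  hm : ContDiff ℝ 2 m
  hup : ZPeriodic u
  hmp : ZPeriodic m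
  hmpos : ∀ x, 0 < m x
  hHJB : ∀ x, -lap u x + (∑ i, (pd i u x + P i) ^ 2) / 2 - v x - α ^ q * (m x) ^ q = H
  hFP : ∀ x, -lap m x - dvg (fun y j => m y * (pd j u y + P j)) x = 0
  humean : (∫ y in unitCube n, u y) = 0
  hmmean : (∫ y in unitCube n, m y) = 1

/-- A classical solution `(ũ, m̃, c)` of the system obtained linearizing the power-type
ergodic MFG system in the direction `e i`. -/
structure LinPowerMFG {n : ℕ} (P : Fin n → ℝ) (α q : ℝ)
    (u m : (Fin n → ℝ) → ℝ) (i : Fin n)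
    (ut mt : (Fin n → ℝ) → ℝ) (c : ℝ) : Prop where
  hut : ContDiff ℝ 2 ut
  hmt : ContDiff ℝ 2 mt
  hutp : ZPeriodic ut
  hmtp : ZPeriodic mt
  heq1 : ∀ x, -lap ut x + (∑ j, pd j ut x * (pd j u x + P j)) + (pd i u x + P i)
      - q * α ^ q * (m x) ^ (q - 1) * mt x = c
  heq2 : ∀ x, -lap mt x - dvg (fun y j => (pd j u y + P j) * mt y) x
      = dvg (fun y j => m y * (pd j ut y + (Pi.single i 1 : Fin n → ℝ) j)) x
  hutmean : (∫ y in unitCube n, ut y) = 0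
  hmtmean : (∫ y in unitCube n, mt y) = 0

section helpers

variable {n : ℕ}

lemma contDiff_pd {f : (Fin n → ℝ) → ℝ} (hf : ContDiff ℝ 2 f) (j : Fin n) :
    ContDiff ℝ 1 (pd j f) :=
  (hf.fderiv_right (m := 1) (by norm_num)).clm_apply contDiff_const

lemma cont_pd {f : (Fin n → ℝ) → ℝ} (hf : ContDiff ℝ 1 f) (j : Fin n) :
    Continuous (pd j f) :=
  (ContinuousLinearMap.apply ℝ ℝ (Pi.single j 1 : Fin n → ℝ)).continuous.comp
    (hf.continuous_fderiv one_ne_zero)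

lemma pd_add {f g : (Fin n → ℝ) → ℝ} {x : Fin n → ℝ}
    (hf : DifferentiableAt ℝ f x) (hg : DifferentiableAt ℝ g x) (j : Fin n) :
    pd j (fun y => f y + g y) x = pd j f x + pd j g x := by
  unfold pd; rw [fderiv_fun_add hf hg]; simp

lemma pd_sub {f g : (Fin n → ℝ) → ℝ} {x : Fin n → ℝ}
    (hf : DifferentiableAt ℝ f x) (hg : DifferentiableAt ℝ g x) (j : Fin n) :
    pd j (fun y => f y - g y) x = pd j f x - pd j g x := by
  unfold pd; rw [fderiv_fun_sub hf hg]; simp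

lemma pd_mul {f g : (Fin n → ℝ) → ℝ} {x : Fin n → ℝ}
    (hf : DifferentiableAt ℝ f x) (hg : DifferentiableAt ℝ g x) (j : Fin n) :
    pd j (fun y => f y * g y) x = pd j f x * g x + f x * pd j g x := by
  unfold pd; rw [fderiv_fun_mul hf hg]
  simp only [ContinuousLinearMap.add_apply, ContinuousLinearMap.coe_smul', Pi.smul_apply,
    smul_eq_mul]
  ring

lemma zper_pd {f : (Fin n → ℝ) → ℝ} (hf : Differentiable ℝ f) (hp : ZPeriodic f) (j : Fin n) :
    ZPeriodic (pd j f) := by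
  intro k x
  have hT : HasFDerivAt (fun y : Fin n → ℝ => y + fun l => (k l : ℝ))
      (ContinuousLinearMap.id ℝ (Fin n → ℝ)) x := (hasFDerivAt_id x).add_const _
  have h2 : HasFDerivAt (fun y : Fin n → ℝ => f (y + fun l => (k l : ℝ)))
      (fderiv ℝ f (x + fun l => (k l : ℝ))) x := by
    exact ((hf _).hasFDerivAt.comp x hT).congr_fderiv (by simp)
  have h3 : (fun y : Fin n → ℝ => f (y + fun l => (k l : ℝ))) = f := funext fun y => hp k y
  rw [h3] at h2
  show fderiv ℝ f (x + fun l => (k l : ℝ)) (Pi.single j 1) = fderiv ℝ f x (Pi.single j 1)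
  rw [h2.fderiv]

end helpers

lemma integral_dvg_eq_zero {N : ℕ} (F : (Fin (N + 1) → ℝ) → Fin (N + 1) → ℝ)
    (hF : ∀ j, ContDiff ℝ 1 fun y => F y j)
    (hp : ∀ j, ZPeriodic fun y => F y j) :
    (∫ y in unitCube (N + 1), dvg F y) = 0 := by
  have hle : (0 : Fin (N + 1) → ℝ) ≤ 1 := fun _ => zero_le_one
  have Hi : IntegrableOn
      (fun x => ∑ j, fderiv ℝ (fun y => F y j) x (Pi.single j 1))
      (Set.Icc (0 : Fin (N + 1) → ℝ) 1) volume := by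
    apply Continuous.integrableOn_Icc
    exact continuous_finset_sum _ fun j _ => cont_pd (hF j) j
  have key : (∫ x in Set.Icc (0 : Fin (N + 1) → ℝ) 1,
        ∑ j, fderiv ℝ (fun y => F y j) x (Pi.single j 1)) =
      ∑ j : Fin (N + 1),
        ((∫ x in Set.Icc ((0 : Fin (N + 1) → ℝ) ∘ j.succAbove) ((1 : Fin (N + 1) → ℝ) ∘ j.succAbove),
            F (j.insertNth ((1 : Fin (N + 1) → ℝ) j) x) j) -
          ∫ x in Set.Icc ((0 : Fin (N + 1) → ℝ) ∘ j.succAbove) ((1 : Fin (N + 1) → ℝ) ∘ j.succAbove),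
            F (j.insertNth ((0 : Fin (N + 1) → ℝ) j) x) j) :=
    integral_divergence_of_hasFDerivAt_off_countable' (0 : Fin (N + 1) → ℝ) 1 hle
      (fun j y => F y j) (fun j x => fderiv ℝ (fun y => F y j) x) ∅ Set.countable_empty
      (fun j => (hF j).continuous.continuousOn)
      (fun x _ j => (((hF j).differentiable one_ne_zero) x).hasFDerivAt) Hi
  have hgoal : (∫ y in unitCube (N + 1), dvg F y) =
      ∫ x in Set.Icc (0 : Fin (N + 1) → ℝ) 1,
        ∑ j, fderiv ℝ (fun y => F y j) x (Pi.single j 1) := rfl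
  rw [hgoal, key]
  refine Finset.sum_eq_zero fun j _ => sub_eq_zero.2 ?_
  refine setIntegral_congr_fun measurableSet_Icc fun x _ => ?_
  have h1 : j.insertNth ((1 : Fin (N + 1) → ℝ) j) x =
      j.insertNth ((0 : Fin (N + 1) → ℝ) j) x
        + fun l => ((Pi.single j 1 : Fin (N + 1) → ℤ) l : ℝ) := by
    funext l
    refine Fin.succAboveCases j ?_ ?_ l
    · simp
    · intro l'
      simp [Fin.succAbove_ne j l', Pi.single_eq_of_ne (Fin.succAbove_ne j l')]
  rw [h1]
  exact hp j (Pi.single j 1) _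

lemma dvg_W_eq {n : ℕ} (P : Fin n → ℝ) (α q : ℝ) (u m ut mt : (Fin n → ℝ) → ℝ)
    (i : Fin n) (c : ℝ)
    (hu : ContDiff ℝ 2 u) (hm : ContDiff ℝ 2 m)
    (hut : ContDiff ℝ 2 ut) (hmt : ContDiff ℝ 2 mt)
    (heq1 : ∀ x, -lap ut x + (∑ j, pd j ut x * (pd j u x + P j)) + (pd i u x + P i)
      - q * α ^ q * (m x) ^ (q - 1) * mt x = c)
    (heq2 : ∀ x, -lap mt x - dvg (fun y j => (pd j u y + P j) * mt y) x
      = dvg (fun y j => m y * (pd j ut y + (Pi.single i 1 : Fin n → ℝ) j)) x)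
    (x : Fin n → ℝ) :
    mt x * pd i u x - q * α ^ q * (m x) ^ (q - 1) * (mt x) ^ 2
        - m x * ∑ j, (pd j ut x + (Pi.single i 1 : Fin n → ℝ) j) * pd j ut x
      = (c - P i) * mt x -
        dvg (fun y j => ut y * (pd j mt y + (pd j u y + P j) * mt y
            + m y * (pd j ut y + (Pi.single i 1 : Fin n → ℝ) j)) - mt y * pd j ut y) x := by
  have h1 := heq1 x
  have h2 := heq2 x
  simp only [dvg, lap] at h1 h2 ⊢
  have hstep : ∀ j : Fin n,
      pd j (fun y => ut y * (pd j mt y + (pd j u y + P j) * mt y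
          + m y * (pd j ut y + (Pi.single i 1 : Fin n → ℝ) j)) - mt y * pd j ut y) x
      = pd j ut x * pd j mt x
        + mt x * (pd j ut x * (pd j u x + P j))
        + m x * ((pd j ut x + (Pi.single i 1 : Fin n → ℝ) j) * pd j ut x)
        + ut x * (pd j (pd j mt) x + pd j (fun y => (pd j u y + P j) * mt y) x
            + pd j (fun y => m y * (pd j ut y + (Pi.single i 1 : Fin n → ℝ) j)) x)
        - pd j ut x * pd j mt x
        - mt x * pd j (pd j ut) x := by
    intro j
    have A1 : DifferentiableAt ℝ ut x := (hut.differentiable two_ne_zero) x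
    have A2 : DifferentiableAt ℝ mt x := (hmt.differentiable two_ne_zero) x
    have A3 : DifferentiableAt ℝ m x := (hm.differentiable two_ne_zero) x
    have A4 : DifferentiableAt ℝ (pd j mt) x := ((contDiff_pd hmt j).differentiable one_ne_zero) x
    have A5 : DifferentiableAt ℝ (pd j u) x := ((contDiff_pd hu j).differentiable one_ne_zero) x
    have A6 : DifferentiableAt ℝ (pd j ut) x := ((contDiff_pd hut j).differentiable one_ne_zero) x
    have B1 : DifferentiableAt ℝ (fun y => (pd j u y + P j) * mt y) x :=
      (A5.add_const _).mul A2
    have B2 : DifferentiableAt ℝ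
        (fun y => m y * (pd j ut y + (Pi.single i 1 : Fin n → ℝ) j)) x :=
      A3.mul (A6.add_const _)
    have B0 : DifferentiableAt ℝ (fun y => pd j mt y + (pd j u y + P j) * mt y) x := A4.add B1
    have B : DifferentiableAt ℝ (fun y => pd j mt y + (pd j u y + P j) * mt y
        + m y * (pd j ut y + (Pi.single i 1 : Fin n → ℝ) j)) x := B0.add B2
    rw [pd_sub (A1.fun_mul B) (A2.fun_mul A6) j, pd_mul A1 B j, pd_mul A2 A6 j, pd_add B0 B2 j,
      pd_add A4 B1 j]
    ring
  have hsum : (∑ j, pd j (fun y => ut y * (pd j mt y + (pd j u y + P j) * mt y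
          + m y * (pd j ut y + (Pi.single i 1 : Fin n → ℝ) j)) - mt y * pd j ut y) x)
      = (∑ j, pd j ut x * pd j mt x)
        + mt x * (∑ j, pd j ut x * (pd j u x + P j))
        + m x * (∑ j, (pd j ut x + (Pi.single i 1 : Fin n → ℝ) j) * pd j ut x)
        + ut x * ((∑ j, pd j (pd j mt) x)
            + (∑ j, pd j (fun y => (pd j u y + P j) * mt y) x)
            + (∑ j, pd j (fun y => m y * (pd j ut y + (Pi.single i 1 : Fin n → ℝ) j)) x))
        - (∑ j, pd j ut x * pd j mt x)
        - mt x * (∑ j, pd j (pd j ut) x) := by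
    rw [Finset.sum_congr rfl fun j _ => hstep j]
    simp only [Finset.sum_add_distrib, Finset.sum_sub_distrib, Finset.mul_sum, mul_add]
  rw [hsum]
  linear_combination mt x * h1 - ut x * h2

/-- Duality identity for the linearized power system. -/
theorem lin_power_mfg_duality {n : ℕ} (hn : 1 ≤ n)
    (v : (Fin n → ℝ) → ℝ) (hv0 : ∀ x, 0 ≤ v x) (hvlip : ∃ K, LipschitzWith K v) (hvper : ZPeriodic v)
    (P : Fin n → ℝ) (α q : ℝ) (hα : 0 < α) (hq : 0 < q)
    (u m : (Fin n → ℝ) → ℝ) (H : ℝ)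
    (h : PowerMFG v P α q u m H)
    (i : Fin n) (ut mt : (Fin n → ℝ) → ℝ) (c : ℝ)
    (hlin : LinPowerMFG P α q u m i ut mt c) :
    (∫ y in unitCube n,
      (mt y * pd i u y - q * α ^ q * (m y) ^ (q - 1) * (mt y) ^ 2
        - m y * ∑ j, (pd j ut y + (Pi.single i 1 : Fin n → ℝ) j) * pd j ut y)) = 0 := by
  
  obtain ⟨N, rfl⟩ : ∃ N, n = N + 1 := ⟨n - 1, by omega⟩
  have c_ut : ContDiff ℝ 1 ut := hlin.hut.of_le one_le_two
  have c_mt : ContDiff ℝ 1 mt := hlin.hmt.of_le one_le_two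
  have c_m : ContDiff ℝ 1 m := h.hm.of_le one_le_two
  -- the vector field W
  set W : (Fin (N + 1) → ℝ) → Fin (N + 1) → ℝ := fun y j =>
    ut y * (pd j mt y + (pd j u y + P j) * mt y
      + m y * (pd j ut y + (Pi.single i 1 : Fin (N + 1) → ℝ) j)) - mt y * pd j ut y with hWdef
  have hWc : ∀ j, ContDiff ℝ 1 fun y => W y j := by
    intro j
    exact (c_ut.mul (((contDiff_pd hlin.hmt j).add
        (((contDiff_pd h.hu j).add contDiff_const).mul c_mt)).add
        (c_m.mul ((contDiff_pd hlin.hut j).add contDiff_const)))).sub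
      (c_mt.mul (contDiff_pd hlin.hut j))
  have hWp : ∀ j, ZPeriodic fun y => W y j := by
    intro j k x
    have e1 := zper_pd (hlin.hmt.differentiable two_ne_zero) hlin.hmtp j k x
    have e2 := zper_pd (h.hu.differentiable two_ne_zero) h.hup j k x
    have e3 := zper_pd (hlin.hut.differentiable two_ne_zero) hlin.hutp j k x
    simp only [hWdef, hlin.hutp k x, hlin.hmtp k x, h.hmp k x, e1, e2, e3]
  have hdvg0 : (∫ y in unitCube (N + 1), dvg W y) = 0 := integral_dvg_eq_zero W hWc hWp
  have hpt := dvg_W_eq P α q u m ut mt i c h.hu h.hm hlin.hut hlin.hmt hlin.heq1 hlin.heq2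
  have hcongr : (∫ y in unitCube (N + 1),
      (mt y * pd i u y - q * α ^ q * (m y) ^ (q - 1) * (mt y) ^ 2
        - m y * ∑ j, (pd j ut y + (Pi.single i 1 : Fin (N + 1) → ℝ) j) * pd j ut y))
      = ∫ y in unitCube (N + 1), ((c - P i) * mt y - dvg W y) := by
    refine integral_congr_ae (Filter.Eventually.of_forall fun y => ?_)
    exact hpt y
  rw [hcongr]
  have hint1 : Integrable (fun y => (c - P i) * mt y)
      (volume.restrict (unitCube (N + 1))) :=
    Continuous.integrableOn_Icc (continuous_const.mul c_mt.continuous)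
  have hint2 : Integrable (fun y => dvg W y) (volume.restrict (unitCube (N + 1))) := by
    have hc : Continuous (dvg W) := by
      unfold dvg
      exact continuous_finset_sum _ fun j _ => cont_pd (hWc j) j
    exact Continuous.integrableOn_Icc hc
  rw [integral_sub hint1 hint2, integral_const_mul, hlin.hmtmean, hdvg0, mul_zero, sub_zero]
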